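/- The subspace of ℂ³⊗ℂ³ spanned by the three vectors w₀ = e₀⊗e₁ + e₁⊗e₀, w₁ = e₁⊗e₂ + e₂⊗e₁, and w₂ = e₀⊗e₂ + e₂⊗e₀ is completely entangled: it contains no nonzero product vector. That is, for all u, v ∈ ℂ³, if u⊗v lies in the span of {w₀, w₁, w₂}, then u⊗v = 0. -/

import Mathlib

/-- The tensor (Kronecker) product of two vectors in `ℂ³`, as an element of
`ℂ³ ⊗ ℂ³ ≅ ℂ⁹` indexed by pairs. -/
def tensorVec (u v : Fin 3 → ℂ) : Fin 3 × Fin 3 → ℂ := fun q => u q.1 * v q.2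

/-- `w₀ = e₀⊗e₁ + e₁⊗e₀`. -/
def w0 : Fin 3 × Fin 3 → ℂ := fun q => if (q.1 = 0 ∧ q.2 = 1) ∨ (q.1 = 1 ∧ q.2 = 0) then 1 else 0

/-- `w₁ = e₁⊗e₂ + e₂⊗e₁`. -/
def w1 : Fin 3 × Fin 3 → ℂ := fun q => if (q.1 = 1 ∧ q.2 = 2) ∨ (q.1 = 2 ∧ q.2 = 1) then 1 else 0

/-- `w₂ = e₀⊗e₂ + e₂⊗e₀`. -/
def w2 : Fin 3 × Fin 3 → ℂ := fun q => if (q.1 = 0 ∧ q.2 = 2) ∨ (q.1 = 2 ∧ q.2 = 0) then 1 else 0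

/-!
Every vector in the span of `w₀, w₁, w₂`, read as a `3 × 3` matrix, is symmetric with zero
diagonal. For a product vector `u ⊗ v` this says `uᵢvᵢ = 0` and `uᵢvⱼ = uⱼvᵢ`, whence
`(uᵢvⱼ)² = (uᵢvᵢ)(uⱼvⱼ) = 0`.
-/

def hollowSymmetric (R ι : Type*) [Semiring R] : Submodule R (ι × ι → R) where
  carrier := {x | (∀ i, x (i, i) = 0) ∧ ∀ i j, x (i, j) = x (j, i)}
  add_mem' {x y} hx hy :=
    ⟨fun i => by simp [hx.1 i, hy.1 i], fun i j => by simp [hx.2 i j, hy.2 i j]⟩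
  zero_mem' := ⟨fun _ => rfl, fun _ _ => rfl⟩
  smul_mem' c x hx := ⟨fun i => by simp [hx.1 i], fun i j => by simp [hx.2 i j]⟩

theorem eq_zero_of_mul_mem_hollowSymmetric {R ι : Type*} [CommSemiring R] [IsReduced R]
    (u v : ι → R) (h : (fun q : ι × ι => u q.1 * v q.2) ∈ hollowSymmetric R ι) :
    (fun q : ι × ι => u q.1 * v q.2) = 0 := by
  have hdiag : ∀ i, u i * v i = 0 := h.1
  have hsymm : ∀ i j, u i * v j = u j * v i := h.2
  funext ⟨i, j⟩
  apply IsReduced.eq_zero _ ⟨2, _⟩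
  calc (u i * v j) ^ 2 = (u i * v j) * (u j * v i) := by rw [sq, hsymm i j]
    _ = (u i * v i) * (u j * v j) := by ring
    _ = 0 := by simp only [hdiag i, zero_mul]

theorem span_w_le_hollowSymmetric :
    Submodule.span ℂ ({w0, w1, w2} : Set (Fin 3 × Fin 3 → ℂ)) ≤ hollowSymmetric ℂ (Fin 3) := by
  simp only [Submodule.span_le, Set.insert_subset_iff, Set.singleton_subset_iff]
  refine ⟨⟨?_, ?_⟩, ⟨?_, ?_⟩, ⟨?_, ?_⟩⟩ <;> simp [Fin.forall_fin_succ, w0, w1, w2]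

theorem stmt_18 :
    ∀ u v : Fin 3 → ℂ,
      tensorVec u v ∈ Submodule.span ℂ ({w0, w1, w2} : Set (Fin 3 × Fin 3 → ℂ)) →
      tensorVec u v = 0 :=
  fun u v hmem => eq_zero_of_mul_mem_hollowSymmetric u v (span_w_le_hollowSymmetric hmem)
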